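/- arXiv:1510.03983 — 9 statements merged into one kernel-verified Lean document; each statement's English description precedes it below -/
import Mathlib

section
/- Let F_q be a finite field, a ∈ F_q nonzero, and q - 1 = d·s with d, s positive integers. Then as polynomials, 1 - (x^s - a^s)^{q-1} ≡ (1/d) · Σ_{j=1}^{d} (x^s / a^s)^j (mod x^q - x); equivalently, for all c ∈ F_q, 1 - (c^s - a^s)^{q-1} = (1/d) Σ_{j=1}^{d} (c^s/a^s)^j. -/
theorem char_function_identity
    (F : Type*) [Field F] [Fintype F] (q d s : ℕ)
    (hq : Fintype.card F = q)
    (hd : 0 < d) (hs : 0 < s) (hds : q - 1 = d * s)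
    (a : F) (ha : a ≠ 0) :
    ∀ c : F,
      1 - (c ^ s - a ^ s) ^ (q - 1) =
        (d : F)⁻¹ * ∑ j ∈ Finset.Icc 1 d, (c ^ s / a ^ s) ^ j := by
  intro c
  have hq2 : 2 ≤ q := by
    have h1 := Fintype.one_lt_card (α := F)
    omega
  obtain ⟨n, hpp, hcard⟩ := FiniteField.card F (ringChar F)
  have hdvd : ringChar F ∣ q := by
    rw [← hq, hcard]
    exact dvd_pow_self _ n.pos.ne'
  have hdF : (d : F) ≠ 0 := by
    intro h
    have hpd : ringChar F ∣ d := (CharP.cast_eq_zero_iff F (ringChar F) d).mp h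
    have h1 : ringChar F ∣ q - 1 := hds ▸ hpd.mul_right s
    have h2 : ringChar F ∣ 1 := by
      have := Nat.dvd_sub hdvd h1
      simpa [Nat.sub_sub_self (by omega : 1 ≤ q)] using this
    have := Nat.le_of_dvd one_pos h2
    have := hpp.two_le
    omega
  have has : a ^ s ≠ 0 := pow_ne_zero _ ha
  by_cases h : c ^ s = a ^ s
  · rw [h, sub_self, zero_pow (by omega : q - 1 ≠ 0), sub_zero, div_self has]
    simp [Nat.card_Icc]
    field_simp
  · have hsub : (c ^ s - a ^ s) ^ (q - 1) = 1 := by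
      rw [← hq]
      exact FiniteField.pow_card_sub_one_eq_one _ (sub_ne_zero.mpr h)
    rw [hsub, sub_self]
    set r := c ^ s / a ^ s with hr
    have hr1 : r ≠ 1 := by
      intro hr1
      exact h ((div_eq_one_iff_eq has).mp hr1)
    have hsum : ∑ j ∈ Finset.Icc 1 d, r ^ j = r * ∑ j ∈ Finset.range d, r ^ j := by
      rw [← Finset.Ico_add_one_right_eq_Icc, Finset.sum_Ico_eq_sum_range, Finset.mul_sum]
      exact Finset.sum_congr rfl fun x _ => by rw [pow_add, pow_one]
    have hkey : r * (r ^ d - 1) = 0 := by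
      by_cases hc : c = 0
      · have : r = 0 := by simp [hr, hc, zero_pow hs.ne']
        simp [this]
      · have hrd : r ^ d = 1 := by
          rw [hr, div_pow, ← pow_mul, ← pow_mul]
          have : s * d = q - 1 := by rw [hds, Nat.mul_comm]
          rw [this, ← hq, FiniteField.pow_card_sub_one_eq_one _ hc,
            FiniteField.pow_card_sub_one_eq_one _ ha]
          simp
        simp [hrd]
    rw [hsum, geom_sum_eq hr1, mul_comm r, div_mul_eq_mul_div, mul_comm _ r, hkey]
    simp
end

section
/- Let q - 1 = ds, ξ a primitive element of F_q, ω = ξ^s, a_0, ..., a_{d-1} ∈ F_q^*, r_0, ..., r_{d-1} positive integers. Define f : F_q → F_q by f(0) = 0 and f(x) = a_i x^{r_i} for x ∈ D_i = ξ^i D_0 (D_0 the s-th roots of unity). Then f is a bijection of F_q if and only if gcd(r_0 r_1 ⋯ r_{d-1}, s) = 1 and the elements a_i^s ω^{i r_i}, 0 ≤ i ≤ d-1, are pairwise distinct. -/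
/-!
Write every nonzero `x` as `ξ ^ (k * d + i)` with `k < s`, `i < d`, and every `a i` as `ξ ^ b i`.
Then `f x = ξ ^ (c i + k * d * r i)` with `c i = b i + i * r i`, so `f` is a permutation exactly
when these exponents are pairwise incongruent modulo `d * s`. Reducing modulo `d` and then
cancelling `d`, this happens iff `k ↦ k * r i` is injective modulo `s` (that is, `r i` is prime
to `s`) and the `c i` are pairwise incongruent modulo `d`; the latter is the injectivity of
`a i ^ s * ω ^ (i * r i) = ξ ^ (s * c i)`.
-/

open Function

theorem injective_iff_injective_comp_units {M₀ β ι : Type*} [GroupWithZero M₀] [Zero β]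
    {f : M₀ → β} {p : ι → M₀ˣ} (hp : Bijective p) (hf0 : f 0 = 0) (hfp : ∀ i, f (p i) ≠ 0) :
    Injective f ↔ Injective (fun i => f (p i)) := by
  have hunit : ∀ x : M₀, x ≠ 0 → ∃ i, (p i : M₀) = x := fun x hx => by
    obtain ⟨i, hi⟩ := hp.2 (Units.mk0 x hx)
    exact ⟨i, by rw [hi, Units.val_mk0]⟩
  refine ⟨fun h => h.comp (Units.val_injective.comp hp.1), fun h x y hxy => ?_⟩
  rcases eq_or_ne x 0 with rfl | hx <;> rcases eq_or_ne y 0 with rfl | hy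
  · rfl
  · obtain ⟨j, rfl⟩ := hunit y hy
    exact absurd (hxy.symm.trans hf0) (hfp j)
  · obtain ⟨i, rfl⟩ := hunit x hx
    exact absurd (hxy.trans hf0) (hfp i)
  · obtain ⟨i, rfl⟩ := hunit x hx
    obtain ⟨j, rfl⟩ := hunit y hy
    rw [h hxy]

theorem injective_pow_iff_modEq {M ι : Type*} [Monoid M] {x : M} (hx : IsOfFinOrder x)
    (e : ι → ℕ) :
    Injective (fun i => x ^ e i) ↔ ∀ i j, e i ≡ e j [MOD orderOf x] → i = j := by
  simp only [Injective, hx.pow_eq_pow_iff_modEq]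

theorem orderOf_eq_card_sub_one_of_forall_pow_eq {G₀ : Type*} [GroupWithZero G₀] [Fintype G₀]
    [DecidableEq G₀] {ξ : G₀ˣ} (hξ : ∀ u, ∃ n : ℕ, ξ ^ n = u) :
    orderOf ξ = Fintype.card G₀ - 1 := by
  rw [orderOf_eq_card_of_forall_mem_zpowers fun u => ?_, Nat.card_eq_fintype_card,
    Fintype.card_units]
  obtain ⟨n, rfl⟩ := hξ u
  exact ⟨n, zpow_natCast ξ n⟩

theorem bijective_pow_mul_add {M : Type*} [LeftCancelMonoid M] [Finite M] {d s : ℕ} {ξ : M}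
    (hξ : ∀ u, ∃ n : ℕ, ξ ^ n = u) (hord : orderOf ξ = d * s) :
    Bijective (fun p : Fin d × Fin s => ξ ^ ((p.2 : ℕ) * d + p.1)) := by
  have hexp : ∀ p : Fin d × Fin s, (p.2 : ℕ) * d + p.1 = finProdFinEquiv p.swap := fun p => by
    simp only [finProdFinEquiv, Equiv.coe_fn_mk, Prod.fst_swap, Prod.snd_swap]
    ring
  rw [mul_comm] at hord
  constructor
  · intro p q hpq
    simp only [hexp, pow_eq_pow_iff_modEq, hord] at hpq
    have := Fin.ext (hpq.eq_of_lt_of_lt (Fin.is_lt _) (Fin.is_lt _))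
    exact Prod.swap_injective (finProdFinEquiv.injective this)
  · intro u
    obtain ⟨n, rfl⟩ := hξ u
    have hlt : n % (s * d) < s * d := hord ▸ Nat.mod_lt _ (orderOf_pos ξ)
    refine ⟨(finProdFinEquiv.symm ⟨n % (s * d), hlt⟩).swap, ?_⟩
    simp only [hexp, Prod.swap_swap, Equiv.apply_symm_apply, ← hord, pow_mod_orderOf]

namespace Nat

theorem coprime_iff_forall_fin_mul_modEq {r s : ℕ} (hs : 0 < s) :
    r.Coprime s ↔ ∀ k l : Fin s, k * r ≡ l * r [MOD s] → k = l := by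
  refine ⟨fun h k l hkl => Fin.ext ?_, fun h => ?_⟩
  · exact (hkl.cancel_right_of_coprime (Nat.coprime_comm.1 h)).eq_of_lt_of_lt k.2 l.2
  · by_contra hne
    have hg : 1 < r.gcd s := lt_of_le_of_ne (Nat.gcd_pos_of_pos_right r hs) (Ne.symm hne)
    have hkill : s / r.gcd s * r ≡ 0 * r [MOD s] := by
      rw [zero_mul, Nat.modEq_zero_iff_dvd, Nat.div_mul_right_comm (Nat.gcd_dvd_right r s),
        Nat.mul_div_assoc s (Nat.gcd_dvd_left r s)]
      exact Nat.dvd_mul_right s _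
    have hzero : s / r.gcd s = 0 :=
      congrArg Fin.val (h ⟨s / r.gcd s, Nat.div_lt_self hs hg⟩ ⟨0, hs⟩ hkill)
    exact (Nat.div_pos (Nat.gcd_le_right _ hs) (Nat.gcd_pos_of_pos_right r hs)).ne' hzero

theorem exists_fin_mul_intModEq_of_coprime {r s : ℕ} (hs : 0 < s) (h : r.Coprime s) (t : ℤ) :
    ∃ k : Fin s, (k * r : ℤ) ≡ t [ZMOD s] := by
  have : NeZero s := ⟨hs.ne'⟩
  set u := ZMod.unitOfCoprime r h
  refine ⟨⟨((t : ZMod s) * ↑u⁻¹).val, ZMod.val_lt _⟩, ?_⟩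
  rw [← ZMod.intCast_eq_intCast_iff]
  push_cast
  rw [ZMod.natCast_zmod_val, ← ZMod.coe_unitOfCoprime r h, mul_assoc, Units.inv_mul, mul_one]

end Nat

theorem add_mul_injective_mod_iff {d s : ℕ} (hd : 0 < d) (hs : 0 < s) (c r : Fin d → ℕ) :
    (∀ p q : Fin d × Fin s,
        c p.1 + p.2 * (d * r p.1) ≡ c q.1 + q.2 * (d * r q.1) [MOD d * s] → p = q) ↔
      (∀ i, (r i).Coprime s) ∧ ∀ i j, c i ≡ c j [MOD d] → i = j := by
  have fiber : ∀ i (k l : ℕ),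
      c i + k * (d * r i) ≡ c i + l * (d * r i) [MOD d * s] ↔ k * r i ≡ l * r i [MOD s] := by
    intro i k l
    rw [Nat.ModEq.rfl.add_iff_left, mul_left_comm k, mul_left_comm l,
      Nat.ModEq.mul_left_cancel_iff' hd.ne']
  have residue : ∀ i (k : ℕ), c i + k * (d * r i) ≡ c i [MOD d] := by
    intro i k
    rw [Nat.ModEq, mul_left_comm, Nat.add_mul_mod_self_left]
  constructor
  · intro h
    have hcop : ∀ i, (r i).Coprime s := fun i =>
      (Nat.coprime_iff_forall_fin_mul_modEq hs).2 fun k l hkl =>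
        congrArg Prod.snd (h (i, k) (i, l) ((fiber i k l).2 hkl))
    refine ⟨hcop, fun i j hij => ?_⟩
    -- `k * d * r i` runs through all multiples of `d` modulo `d * s`, in particular `c j - c i`
    obtain ⟨t, ht⟩ := Nat.modEq_iff_dvd.1 hij
    obtain ⟨k, hk⟩ := Nat.exists_fin_mul_intModEq_of_coprime hs (hcop i) t
    obtain ⟨u, hu⟩ := hk.dvd
    refine congrArg Prod.fst (h (i, k) (j, ⟨0, hs⟩) (Nat.modEq_iff_dvd.2 ⟨u, ?_⟩))
    push_cast
    linear_combination ht + (d : ℤ) * hu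
  · rintro ⟨hcop, hc⟩ ⟨i, k⟩ ⟨j, l⟩ h
    obtain rfl : i = j :=
      hc i j ((residue i k).symm.trans ((h.of_mul_right s).trans (residue j l)))
    have hkl := ((fiber i k l).1 h).cancel_right_of_coprime (Nat.coprime_comm.1 (hcop i))
    rw [Fin.ext (hkl.eq_of_lt_of_lt k.2 l.2)]

theorem cyclotomic_mapping_pp_criterion_general
    (F : Type*) [Field F] [Fintype F] (q d s : ℕ)
    (hq : Fintype.card F = q)
    (hd : 0 < d) (hs : 0 < s) (hds : q - 1 = d * s)
    (ξ : Fˣ) (hξ : ∀ u : Fˣ, ∃ n : ℕ, ξ ^ n = u)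
    (ω : F) (hω : ω = (ξ : F) ^ s)
    (D : Fin d → Set F)
    (hD : ∀ i, D i = {x : F | ∃ k < s, x = (ξ : F) ^ (k * d + (i : ℕ))})
    (a : Fin d → F) (ha : ∀ i, a i ≠ 0)
    (r : Fin d → ℕ)
    (f : F → F) (hf0 : f 0 = 0)
    (hf : ∀ i, ∀ x ∈ D i, f x = a i * x ^ r i) :
    Function.Bijective f ↔
      Nat.gcd (∏ i, r i) s = 1 ∧
      Function.Injective (fun i : Fin d => a i ^ s * ω ^ ((i : ℕ) * r i)) := by
  classical
  have hord : orderOf ξ = d * s := by rw [orderOf_eq_card_sub_one_of_forall_pow_eq hξ, hq, hds]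
  have hordF : orderOf (ξ : F) = d * s := orderOf_units.trans hord
  have hfin : IsOfFinOrder (ξ : F) := orderOf_pos_iff.1 (hordF ▸ Nat.mul_pos hd hs)
  have hlog : ∀ i, ∃ n : ℕ, (ξ : F) ^ n = a i := fun i => by
    obtain ⟨n, hn⟩ := hξ (Units.mk0 (a i) (ha i))
    exact ⟨n, by simpa using congrArg Units.val hn⟩
  choose b hb using hlog
  set c : Fin d → ℕ := fun i => b i + i * r i
  have hfξ : ∀ p : Fin d × Fin s,
      f ↑(ξ ^ ((p.2 : ℕ) * d + p.1)) = (ξ : F) ^ (c p.1 + p.2 * (d * r p.1)) := fun p => by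
    rw [Units.val_pow_eq_pow_val, hf p.1 _ (by rw [hD]; exact ⟨p.2, p.2.2, rfl⟩), ← hb,
      ← pow_mul, ← pow_add]
    congr 1
    simp only [c]
    ring
  have hsymbol : (fun i => a i ^ s * ω ^ ((i : ℕ) * r i)) = fun i => (ξ : F) ^ (s * c i) := by
    ext i
    rw [hω, ← hb, ← pow_mul, ← pow_mul, ← pow_add]
    congr 1
    simp only [c]
    ring
  rw [← Finite.injective_iff_bijective, injective_iff_injective_comp_units
      (bijective_pow_mul_add hξ hord) hf0 fun p => hfξ p ▸ pow_ne_zero _ ξ.ne_zero]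
  simp only [hfξ]
  rw [injective_pow_iff_modEq hfin, hordF, add_mul_injective_mod_iff hd hs, hsymbol,
    injective_pow_iff_modEq hfin, hordF, ← Nat.Coprime, Nat.coprime_prod_left_iff, mul_comm d s]
  simp only [Finset.mem_univ, true_implies, Nat.ModEq.mul_left_cancel_iff' hs.ne']

theorem cyclotomic_mapping_pp_criterion
    (F : Type*) [Field F] [Fintype F] (q d s : ℕ)
    (hq : Fintype.card F = q)
    (hd : 0 < d) (hs : 0 < s) (hds : q - 1 = d * s)
    (ξ : Fˣ) (hξ : ∀ u : Fˣ, ∃ n : ℕ, ξ ^ n = u)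
    (ω : F) (hω : ω = (ξ : F) ^ s)
    (D : Fin d → Set F)
    (hD : ∀ i, D i = {x : F | ∃ k < s, x = (ξ : F) ^ (k * d + (i : ℕ))})
    (a : Fin d → F) (ha : ∀ i, a i ≠ 0)
    (r : Fin d → ℕ) (hr : ∀ i, 0 < r i)
    (f : F → F) (hf0 : f 0 = 0)
    (hf : ∀ i, ∀ x ∈ D i, f x = a i * x ^ r i) :
    Function.Bijective f ↔
      Nat.gcd (∏ i, r i) s = 1 ∧
      Function.Injective (fun i : Fin d => a i ^ s * ω ^ ((i : ℕ) * r i)) :=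
  cyclotomic_mapping_pp_criterion_general F q d s hq hd hs hds ξ hξ ω hω D hD a ha r f hf0 hf
end

section
/- Let q - 1 = ds, ξ primitive in F_q, ω = ξ^s, and suppose the generalized cyclotomic mapping f with f(0)=0 and f(x) = a_i x^{r_i} on D_i = ξ^i D_0 is a bijection of F_q. Let r̃_i, t_i ∈ ℤ satisfy r_i r̃_i + s t_i = 1. Then the map g defined by g(0) = 0 and g(y) = ω^{i t_i}(y/a_i)^{r̃_i} for y ∈ f(D_i) satisfies g(f(c)) = c for all c ∈ F_q. -/
theorem cyclotomic_mapping_inverse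
    (F : Type*) [Field F] [Fintype F] (q d s : ℕ)
    (hq : Fintype.card F = q)
    (hd : 0 < d) (hs : 0 < s) (hds : q - 1 = d * s)
    (ξ : Fˣ) (hξ : ∀ u : Fˣ, ∃ n : ℕ, ξ ^ n = u)
    (ω : F) (hω : ω = (ξ : F) ^ s)
    (D : Fin d → Set F)
    (hD : ∀ i, D i = {x : F | ∃ k < s, x = (ξ : F) ^ (k * d + (i : ℕ))})
    (a : Fin d → F) (ha : ∀ i, a i ≠ 0)
    (r : Fin d → ℕ) (hr : ∀ i, 0 < r i)
    (f : F → F) (hf0 : f 0 = 0)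
    (hf : ∀ i, ∀ x ∈ D i, f x = a i * x ^ r i)
    (hbij : Function.Bijective f)
    (rt t : Fin d → ℤ)
    (hrt : ∀ i, (r i : ℤ) * rt i + (s : ℤ) * t i = 1)
    (g : F → F) (hg0 : g 0 = 0)
    (hg : ∀ i, ∀ y ∈ f '' D i, g y = ω ^ (((i : ℕ) : ℤ) * t i) * (y / a i) ^ rt i) :
    ∀ c : F, g (f c) = c := by
  classical
  intro c
  by_cases hc : c = 0
  · simp [hc, hf0, hg0]
  obtain ⟨u, rfl⟩ : ∃ u : Fˣ, (u : F) = c := ⟨Units.mk0 c hc, rfl⟩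
  obtain ⟨n, hn⟩ := hξ u
  have hds0 : 0 < d * s := Nat.mul_pos hd hs
  have hcardu : Fintype.card Fˣ = d * s := by
    rw [Fintype.card_units, hq, hds]
  have hone : ξ ^ (d * s) = 1 := by rw [← hcardu]; exact pow_card_eq_one
  obtain ⟨m, hum, hmlt⟩ : ∃ m, ξ ^ m = u ∧ m < d * s := by
    refine ⟨n % (d * s), ?_, Nat.mod_lt _ hds0⟩
    rw [← hn]
    conv_rhs => rw [← Nat.mod_add_div n (d * s)]
    rw [pow_add, pow_mul, hone, one_pow, mul_one]
  obtain ⟨i, k, hmdecomp, hklt⟩ :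
      ∃ (i : Fin d) (k : ℕ), m = k * d + (i : ℕ) ∧ k < s :=
    ⟨⟨m % d, Nat.mod_lt _ hd⟩, m / d, by simp only [Fin.val_mk]; rw [mul_comm]; exact (Nat.div_add_mod m d).symm,
      Nat.div_lt_of_lt_mul hmlt⟩
  have hcD : (u : F) ∈ D i := by
    rw [hD]
    refine ⟨k, hklt, ?_⟩
    rw [← hmdecomp, ← hum]
    push_cast
    ring
  have hfc : f u = a i * (u : F) ^ r i := hf i _ hcD
  have hgfc : g (f u) = ω ^ (((i : ℕ) : ℤ) * t i) * ((f u) / a i) ^ rt i :=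
    hg i _ ⟨u, hcD, rfl⟩
  have hdiv : (f u : F) / a i = (u : F) ^ r i := by
    rw [hfc, mul_div_cancel_left₀ _ (ha i)]
  have hexp : (s : ℤ) * (((i : ℕ) : ℤ) * t i) + (m : ℤ) * ((r i : ℤ) * rt i)
      = (m : ℤ) + ((d * s : ℕ) : ℤ) * (-(t i) * k) := by
    have hmz : (m : ℤ) = (k : ℤ) * d + ((i : ℕ) : ℤ) := by exact_mod_cast hmdecomp
    push_cast
    linear_combination (m : ℤ) * hrt i - ((s : ℤ) * t i) * hmz
  have key : (ξ ^ s) ^ (((i : ℕ) : ℤ) * t i) * ((ξ ^ m) ^ (r i : ℤ)) ^ (rt i) = ξ ^ m := by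
    rw [← zpow_natCast ξ s, ← zpow_natCast ξ m, ← zpow_mul, ← zpow_mul, ← zpow_mul,
      ← zpow_add, hexp, zpow_add, zpow_mul, zpow_natCast ξ (d * s), hone, one_zpow,
      mul_one, zpow_natCast]
  have keyF : ((ξ : F) ^ s) ^ (((i : ℕ) : ℤ) * t i) * (((ξ : F) ^ m) ^ (r i : ℤ)) ^ (rt i)
      = ((ξ ^ m : Fˣ) : F) := by
    exact_mod_cast congrArg Units.val key
  rw [hgfc, hdiv, hω, ← hum]
  push_cast
  rw [← zpow_natCast (((ξ : F) ^ m)) (r i)]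
  exact_mod_cast keyF
end

section
/- Let q be odd, s = (q-1)/2, a_0, a_1 ∈ F_q^*, r_0, r_1 positive integers. Then f(x) = (1/2) a_0 x^{r_0}(1 + x^s) + (1/2) a_1 x^{r_1}(1 - x^s) is a permutation polynomial of F_q if and only if gcd(r_0 r_1, s) = 1 and (a_0 a_1)^s = (-1)^{r_1 + 1}. -/
/-!
Write `χ(x) = x ^ s`, which is `±1` on `F^*` according as `x` is a square or not. On each class `f`
is a monomial `a x ^ r`, and as points of one class have the same `χ`, two of them collide iff
their ratio `u` satisfies `u ^ r = u ^ s = 1`; so `f` is injective on the class iff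
`gcd(r, s) = 1` (otherwise Cauchy's theorem in `F^*`, of order `2s`, supplies such a `u ≠ 1`).
Moreover `χ ∘ f` is constant on each class, equal to `χ(a₀)` on squares and `χ(a₁)(-1)^{r₁}` on
non-squares: if these values differ the images of the two classes are disjoint, and if they agree
`f` maps the `2s` units into the at most `s` roots of `X ^ s - χ(a₀)`.
-/

open Finset Polynomial Function

theorem Polynomial.card_nthRootsFinset_le {R : Type*} [CommRing R] [IsDomain R] (n : ℕ) (a : R) :
    #(nthRootsFinset n a) ≤ n := by
  classical
  rw [nthRootsFinset_def]
  exact (Multiset.toFinset_card_le _).trans (card_nthRoots n a)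

theorem eq_of_pow_eq_pow_of_coprime {G₀ : Type*} [CommGroupWithZero G₀] {u v : G₀} {r s : ℕ}
    (hrs : r.Coprime s) (hv : v ≠ 0) (hr : u ^ r = v ^ r) (hs : u ^ s = v ^ s) : u = v := by
  have hpow : ∀ n, u ^ n = v ^ n → (u / v) ^ n = 1 := fun n h => by
    rw [div_pow, h, div_self (pow_ne_zero n hv)]
  exact (div_eq_one_iff_eq hv).1 ((pow_eq_one_iff_of_coprime hrs).1 ⟨hpow r hr, hpow s hs⟩)

theorem exists_ne_one_pow_eq_one_of_gcd_ne_one {G : Type*} [Group G] [Fintype G] {r s : ℕ}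
    (hs : s ∣ Fintype.card G) (hrs : r.gcd s ≠ 1) : ∃ u : G, u ≠ 1 ∧ u ^ r = 1 ∧ u ^ s = 1 := by
  obtain ⟨p, hp, hpd⟩ := Nat.exists_prime_and_dvd hrs
  have := Fact.mk hp
  obtain ⟨u, hu⟩ := exists_prime_orderOf_dvd_card p ((hpd.trans (Nat.gcd_dvd_right r s)).trans hs)
  refine ⟨u, fun h => hp.ne_one (by rw [← hu, h, orderOf_one]), pow_gcd_eq_one.1 ?_⟩
  rw [← orderOf_dvd_iff_pow_eq_one, hu]
  exact hpd

namespace FiniteField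

variable {F : Type*} [Field F] [Fintype F] {s : ℕ}

theorem two_ne_zero_of_card_eq (hcard : Fintype.card F = 2 * s + 1) : (2 : F) ≠ 0 :=
  Ring.two_ne_zero fun h => by have := even_card_iff_char_two.1 h; omega

theorem pos_of_card_eq (hcard : Fintype.card F = 2 * s + 1) : 0 < s := by
  have := Fintype.one_lt_card (α := F); omega

theorem pow_two_mul_eq_one (hcard : Fintype.card F = 2 * s + 1) {x : F} (hx : x ≠ 0) :
    x ^ (2 * s) = 1 := by
  simpa [hcard] using pow_card_sub_one_eq_one x hx

theorem pow_eq_one_or_neg_one (hcard : Fintype.card F = 2 * s + 1) {x : F} (hx : x ≠ 0) :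
    x ^ s = 1 ∨ x ^ s = -1 :=
  mul_self_eq_one_iff.1 (by rw [← pow_add, ← two_mul, pow_two_mul_eq_one hcard hx])

theorem exists_ne_zero_pow_ne_of_injective (hcard : Fintype.card F = 2 * s + 1) (c : F)
    {g : F → F} (hg : Injective g) : ∃ x ≠ 0, g x ^ s ≠ c := by
  classical
  by_contra! h
  have hle := card_le_card_of_injOn g (s := univ.erase 0) (t := nthRootsFinset s c)
    (fun x hx => (mem_nthRootsFinset (pos_of_card_eq hcard) c).2 (h x (ne_of_mem_erase hx)))
    hg.injOn
  rw [card_erase_of_mem (mem_univ 0), card_univ, hcard] at hle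
  have := card_nthRootsFinset_le s c
  have := pos_of_card_eq hcard
  omega

theorem exists_pow_eq_neg_one (hcard : Fintype.card F = 2 * s + 1) : ∃ x : F, x ^ s = -1 := by
  obtain ⟨x, hx, hxs⟩ := exists_ne_zero_pow_ne_of_injective hcard 1 injective_id
  exact ⟨x, (pow_eq_one_or_neg_one hcard hx).resolve_left hxs⟩

theorem coprime_of_injective_of_eq_mul_pow (hcard : Fintype.card F = 2 * s + 1) {f : F → F}
    (hinj : Injective f) {a c x₀ : F} {r : ℕ} (hx₀ : x₀ ≠ 0) (hx₀s : x₀ ^ s = c)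
    (hf : ∀ x, x ^ s = c → f x = a * x ^ r) : r.Coprime s := by
  classical
  by_contra hrs
  obtain ⟨u, hu1, hur, hus⟩ := exists_ne_one_pow_eq_one_of_gcd_ne_one (G := Fˣ)
    (by simp [Fintype.card_units, hcard]) hrs
  have hur' : (u : F) ^ r = 1 := by rw [← Units.val_pow_eq_pow_val, hur, Units.val_one]
  have hus' : (u : F) ^ s = 1 := by rw [← Units.val_pow_eq_pow_val, hus, Units.val_one]
  have hcollide : f (x₀ * u) = f x₀ := by
    rw [hf _ (by rw [mul_pow, hus', mul_one, hx₀s]), hf _ hx₀s, mul_pow, hur', mul_one]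
  exact hu1 (Units.ext (mul_left_cancel₀ hx₀ ((hinj hcollide).trans (mul_one x₀).symm)))

theorem pow_ne_mul_neg_one_pow_iff (hcard : Fintype.card F = 2 * s + 1) {a₀ a₁ : F}
    (ha₀ : a₀ ≠ 0) (ha₁ : a₁ ≠ 0) (r : ℕ) :
    a₀ ^ s ≠ a₁ ^ s * (-1) ^ r ↔ (a₀ * a₁) ^ s = (-1) ^ (r + 1) := by
  have ha₁s : a₁ ^ s * a₁ ^ s = 1 := by rw [← pow_add, ← two_mul, pow_two_mul_eq_one hcard ha₁]
  have hsq : ((a₀ * a₁) ^ s) ^ 2 = ((-1 : F) ^ r) ^ 2 := by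
    rw [← pow_mul, mul_comm s, pow_two_mul_eq_one hcard (mul_ne_zero ha₀ ha₁), ← pow_mul,
      mul_comm r, pow_mul, neg_one_sq, one_pow]
  rw [pow_succ, mul_neg_one]
  constructor
  · intro hne
    refine (sq_eq_sq_iff_eq_or_eq_neg.1 hsq).resolve_left fun h => hne ?_
    linear_combination a₁ ^ s * h - a₀ ^ s * ha₁s
  · intro h h'
    have h2 : 2 * (-1 : F) ^ r = 0 := by
      linear_combination h - a₁ ^ s * h' - (-1 : F) ^ r * ha₁s
    exact mul_ne_zero (two_ne_zero_of_card_eq hcard) (pow_ne_zero r (neg_ne_zero.2 one_ne_zero)) h2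

end FiniteField

open FiniteField

structure IsTwoPieceMonomial {F : Type*} [Field F] (s : ℕ) (a₀ a₁ : F) (r₀ r₁ : ℕ) (f : F → F) :
    Prop where
  map_zero : f 0 = 0
  apply_of_pow_eq_one : ∀ x, x ^ s = 1 → f x = a₀ * x ^ r₀
  apply_of_pow_eq_neg_one : ∀ x, x ^ s = -1 → f x = a₁ * x ^ r₁

namespace IsTwoPieceMonomial

variable {F : Type*} [Field F] {s r₀ r₁ : ℕ} {a₀ a₁ : F} {f : F → F}

theorem apply_pow_of_pow_eq_one (hf : IsTwoPieceMonomial s a₀ a₁ r₀ r₁ f) {x : F}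
    (hx : x ^ s = 1) : f x ^ s = a₀ ^ s := by
  rw [hf.apply_of_pow_eq_one x hx, mul_pow, pow_right_comm, hx, one_pow, mul_one]

theorem apply_pow_of_pow_eq_neg_one (hf : IsTwoPieceMonomial s a₀ a₁ r₀ r₁ f) {x : F}
    (hx : x ^ s = -1) : f x ^ s = a₁ ^ s * (-1) ^ r₁ := by
  rw [hf.apply_of_pow_eq_neg_one x hx, mul_pow, pow_right_comm, hx]

variable [Fintype F]

theorem apply_eq_zero_iff (hf : IsTwoPieceMonomial s a₀ a₁ r₀ r₁ f)
    (hcard : Fintype.card F = 2 * s + 1) (ha₀ : a₀ ≠ 0) (ha₁ : a₁ ≠ 0) {x : F} :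
    f x = 0 ↔ x = 0 := by
  refine ⟨fun hfx => by_contra fun hx => ?_, fun hx => hx ▸ hf.map_zero⟩
  rcases pow_eq_one_or_neg_one hcard hx with hxs | hxs
  · exact mul_ne_zero ha₀ (pow_ne_zero r₀ hx) (hf.apply_of_pow_eq_one x hxs ▸ hfx)
  · exact mul_ne_zero ha₁ (pow_ne_zero r₁ hx) (hf.apply_of_pow_eq_neg_one x hxs ▸ hfx)

theorem injective (hf : IsTwoPieceMonomial s a₀ a₁ r₀ r₁ f)
    (hcard : Fintype.card F = 2 * s + 1) (ha₀ : a₀ ≠ 0) (ha₁ : a₁ ≠ 0)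
    (h₀ : r₀.Coprime s) (h₁ : r₁.Coprime s) (hne : a₀ ^ s ≠ a₁ ^ s * (-1) ^ r₁) :
    Injective f := by
  intro x y hxy
  rcases eq_or_ne y 0 with rfl | hy
  · rwa [hf.map_zero, hf.apply_eq_zero_iff hcard ha₀ ha₁] at hxy
  rcases eq_or_ne x 0 with rfl | hx
  · rw [hf.map_zero, eq_comm, hf.apply_eq_zero_iff hcard ha₀ ha₁] at hxy
    exact hxy.symm
  rcases pow_eq_one_or_neg_one hcard hx with hxs | hxs <;>
    rcases pow_eq_one_or_neg_one hcard hy with hys | hys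
  · rw [hf.apply_of_pow_eq_one x hxs, hf.apply_of_pow_eq_one y hys] at hxy
    exact eq_of_pow_eq_pow_of_coprime h₀ hy (mul_left_cancel₀ ha₀ hxy) (hxs.trans hys.symm)
  · exact absurd (by rw [← hf.apply_pow_of_pow_eq_one hxs, hxy,
      hf.apply_pow_of_pow_eq_neg_one hys]) hne
  · exact absurd (by rw [← hf.apply_pow_of_pow_eq_one hys, ← hxy,
      hf.apply_pow_of_pow_eq_neg_one hxs]) hne
  · rw [hf.apply_of_pow_eq_neg_one x hxs, hf.apply_of_pow_eq_neg_one y hys] at hxy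
    exact eq_of_pow_eq_pow_of_coprime h₁ hy (mul_left_cancel₀ ha₁ hxy) (hxs.trans hys.symm)

theorem pow_ne_of_injective (hf : IsTwoPieceMonomial s a₀ a₁ r₀ r₁ f)
    (hcard : Fintype.card F = 2 * s + 1) (hinj : Injective f) :
    a₀ ^ s ≠ a₁ ^ s * (-1) ^ r₁ := by
  intro hpow
  obtain ⟨x, hx, hfx⟩ := exists_ne_zero_pow_ne_of_injective hcard (a₀ ^ s) hinj
  rcases pow_eq_one_or_neg_one hcard hx with hxs | hxs
  · exact hfx (hf.apply_pow_of_pow_eq_one hxs)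
  · exact hfx ((hf.apply_pow_of_pow_eq_neg_one hxs).trans hpow.symm)

theorem injective_iff (hf : IsTwoPieceMonomial s a₀ a₁ r₀ r₁ f)
    (hcard : Fintype.card F = 2 * s + 1) (ha₀ : a₀ ≠ 0) (ha₁ : a₁ ≠ 0) :
    Injective f ↔ (r₀.Coprime s ∧ r₁.Coprime s) ∧ a₀ ^ s ≠ a₁ ^ s * (-1) ^ r₁ := by
  refine ⟨fun hinj => ⟨⟨?_, ?_⟩, hf.pow_ne_of_injective hcard hinj⟩,
    fun ⟨⟨h₀, h₁⟩, hne⟩ => hf.injective hcard ha₀ ha₁ h₀ h₁ hne⟩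
  · exact coprime_of_injective_of_eq_mul_pow hcard hinj one_ne_zero (one_pow s)
      hf.apply_of_pow_eq_one
  · obtain ⟨g, hg⟩ := exists_pow_eq_neg_one hcard
    have hg0 : g ≠ 0 := by rintro rfl; simp [zero_pow (pos_of_card_eq hcard).ne'] at hg
    exact coprime_of_injective_of_eq_mul_pow hcard hinj hg0 hg hf.apply_of_pow_eq_neg_one

end IsTwoPieceMonomial

theorem two_piece_pp_criterion_general
    (F : Type*) [Field F] [Fintype F] (q s : ℕ)
    (hq : Fintype.card F = q)
    (hs : q - 1 = 2 * s)
    (a0 a1 : F) (ha0 : a0 ≠ 0) (ha1 : a1 ≠ 0)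
    (r0 r1 : ℕ) (hr0 : 0 < r0) (hr1 : 0 < r1)
    (f : F → F)
    (hf : ∀ x : F, f x = (2 : F)⁻¹ * a0 * x ^ r0 * (1 + x ^ s)
                        + (2 : F)⁻¹ * a1 * x ^ r1 * (1 - x ^ s)) :
    Function.Bijective f ↔
      Nat.gcd (r0 * r1) s = 1 ∧ (a0 * a1) ^ s = (-1 : F) ^ (r1 + 1) := by
  have hcard : Fintype.card F = 2 * s + 1 := by have := Fintype.card_pos (α := F); omega
  have h2 : (2 : F)⁻¹ * 2 = 1 := inv_mul_cancel₀ (two_ne_zero_of_card_eq hcard)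
  have hpiece : IsTwoPieceMonomial s a0 a1 r0 r1 f :=
    { map_zero := by simp [hf, zero_pow hr0.ne', zero_pow hr1.ne']
      apply_of_pow_eq_one := fun x hx => by
        rw [hf, hx]; linear_combination a0 * x ^ r0 * h2
      apply_of_pow_eq_neg_one := fun x hx => by
        rw [hf, hx]; linear_combination a1 * x ^ r1 * h2 }
  rw [← Finite.injective_iff_bijective, hpiece.injective_iff hcard ha0 ha1,
    pow_ne_mul_neg_one_pow_iff hcard ha0 ha1, ← Nat.coprime_iff_gcd_eq_one,
    Nat.coprime_mul_iff_left]

theorem two_piece_pp_criterion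
    (F : Type*) [Field F] [Fintype F] (q s : ℕ)
    (hq : Fintype.card F = q) (hqodd : Odd q)
    (hs : q - 1 = 2 * s)
    (a0 a1 : F) (ha0 : a0 ≠ 0) (ha1 : a1 ≠ 0)
    (r0 r1 : ℕ) (hr0 : 0 < r0) (hr1 : 0 < r1)
    (f : F → F)
    (hf : ∀ x : F, f x = (2 : F)⁻¹ * a0 * x ^ r0 * (1 + x ^ s)
                        + (2 : F)⁻¹ * a1 * x ^ r1 * (1 - x ^ s)) :
    Function.Bijective f ↔
      Nat.gcd (r0 * r1) s = 1 ∧ (a0 * a1) ^ s = (-1 : F) ^ (r1 + 1) :=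
  two_piece_pp_criterion_general F q s hq hs a0 a1 ha0 ha1 r0 r1 hr0 hr1 f hf
end

section
/- Let q be odd, s = (q-1)/2, a_0, a_1 ∈ F_q^*, and suppose f(x) = (1/2) a_0 x^{r_0}(1+x^s) + (1/2) a_1 x^{r_1}(1-x^s) is a permutation of F_q. Let r̃_i, t_i ∈ ℤ with 1 ≤ r̃_i < s and r_i r̃_i + s t_i = 1. Then the inverse of f is g(x) = (1/2)(x/a_0)^{r̃_0}(1 + (x/a_0)^s) + (1/2)(-1)^{t_1}(x/a_1)^{r̃_1}(1 + (-1)^{r_1}(x/a_1)^s), i.e., g(f(c)) = c for all c ∈ F_q. -/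
theorem exists_pow_s_eq_neg_one' (F : Type*) [Field F] [Fintype F] (q s : ℕ)
    (hq : Fintype.card F = q) (hs : q - 1 = 2 * s) (hspos : 0 < s) :
    ∃ ν : F, ν ≠ 0 ∧ ν ^ s = -1 := by
  letI : Fintype Fˣ := Fintype.ofFinite _
  obtain ⟨g, hg⟩ := IsCyclic.exists_generator (α := Fˣ)
  have hord : orderOf g = 2 * s := by
    rw [orderOf_eq_card_of_forall_mem_zpowers hg, Nat.card_units,
      Nat.card_eq_fintype_card, hq, hs]
  refine ⟨(g : F), Units.ne_zero g, ?_⟩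
  have hne1 : (g : F) ^ s ≠ 1 := by
    intro h
    have h1 : g ^ s = 1 := Units.ext (by rw [Units.val_pow_eq_pow_val, h, Units.val_one])
    have h2 := orderOf_dvd_of_pow_eq_one h1
    rw [hord] at h2
    have := Nat.le_of_dvd hspos h2
    omega
  have hsq : (g : F) ^ s * (g : F) ^ s = 1 := by
    rw [← pow_add]
    have h1 : g ^ (2 * s) = 1 := by rw [← hord]; exact pow_orderOf_eq_one g
    have h2 : (g : F) ^ (2 * s) = 1 := by
      rw [← Units.val_pow_eq_pow_val, h1, Units.val_one]
    rw [two_mul] at h2; exact h2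
  rcases mul_self_eq_one_iff.1 hsq with h | h
  · exact absurd h hne1
  · exact h

theorem two_piece_pp_inverse
    (F : Type*) [Field F] [Fintype F] (q s : ℕ)
    (hq : Fintype.card F = q) (hqodd : Odd q)
    (hs : q - 1 = 2 * s)
    (a0 a1 : F) (ha0 : a0 ≠ 0) (ha1 : a1 ≠ 0)
    (r0 r1 : ℕ) (hr0 : 0 < r0) (hr1 : 0 < r1)
    (f : F → F)
    (hf : ∀ x : F, f x = (2 : F)⁻¹ * a0 * x ^ r0 * (1 + x ^ s)
                        + (2 : F)⁻¹ * a1 * x ^ r1 * (1 - x ^ s))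
    (hbij : Function.Bijective f)
    (rt0 rt1 : ℕ) (t0 t1 : ℤ)
    (hrt0' : 1 ≤ rt0 ∧ rt0 < s) (hrt1' : 1 ≤ rt1 ∧ rt1 < s)
    (hrt0 : (r0 : ℤ) * rt0 + (s : ℤ) * t0 = 1)
    (hrt1 : (r1 : ℤ) * rt1 + (s : ℤ) * t1 = 1)
    (g : F → F)
    (hg : ∀ x : F, g x = (2 : F)⁻¹ * (x / a0) ^ rt0 * (1 + (x / a0) ^ s)
            + (2 : F)⁻¹ * (-1 : F) ^ t1 * (x / a1) ^ rt1 * (1 + (-1 : F) ^ r1 * (x / a1) ^ s)) :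
    ∀ c : F, g (f c) = c := by
  -- basic facts
  have h2 : (2 : F) ≠ 0 := by
    intro h2
    have hcast : ((q : ℕ) : F) = 0 := by rw [← hq]; exact FiniteField.cast_card_eq_zero F
    obtain ⟨k, hk⟩ := hqodd
    rw [hk] at hcast
    push_cast at hcast
    rw [show ((2:F) * k + 1) = 2 * k + 1 from rfl] at hcast
    rw [h2] at hcast
    simp at hcast
  have hq1 : 1 < q := by rw [← hq]; exact Fintype.one_lt_card
  have hspos : 0 < s := by
    obtain ⟨k, hk⟩ := hqodd
    omega
  have hpow : ∀ x : F, x ≠ 0 → x ^ (2 * s) = 1 := by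
    intro x hx
    have := FiniteField.pow_card_sub_one_eq_one x hx
    rwa [hq, hs] at this
  have hdichot : ∀ x : F, x ≠ 0 → x ^ s = 1 ∨ x ^ s = -1 := by
    intro x hx
    refine mul_self_eq_one_iff.1 ?_
    rw [← pow_add]
    have := hpow x hx
    rwa [two_mul] at this
  have hA0 : a0 ^ s * a0 ^ s = 1 := by rw [← pow_add, ← two_mul]; exact hpow a0 ha0
  have hA1 : a1 ^ s * a1 ^ s = 1 := by rw [← pow_add, ← two_mul]; exact hpow a1 ha1
  have hf0 : f 0 = 0 := by
    rw [hf]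
    rw [zero_pow hr0.ne', zero_pow hr1.ne']
    ring
  have hf1 : ∀ x : F, x ^ s = 1 → f x = a0 * x ^ r0 := by
    intro x h
    rw [hf, h]
    calc (2:F)⁻¹ * a0 * x ^ r0 * (1 + 1) + 2⁻¹ * a1 * x ^ r1 * (1 - 1)
        = (a0 * x ^ r0) * ((2:F)⁻¹ * 2) := by ring
      _ = a0 * x ^ r0 := by rw [inv_mul_cancel₀ h2, mul_one]
  have hfm1 : ∀ x : F, x ^ s = -1 → f x = a1 * x ^ r1 := by
    intro x h
    rw [hf, h]
    calc (2:F)⁻¹ * a0 * x ^ r0 * (1 + -1) + 2⁻¹ * a1 * x ^ r1 * (1 - -1)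
        = (a1 * x ^ r1) * ((2:F)⁻¹ * 2) := by ring
      _ = a1 * x ^ r1 := by rw [inv_mul_cancel₀ h2, mul_one]
  have hm : (-1 : F) ^ r1 * (-1 : F) ^ r1 = 1 := by
    rw [← pow_add]
    exact Even.neg_one_pow ⟨r1, rfl⟩
  -- the key identity
  have hkey : a0 ^ s * a1 ^ s = (-1 : F) ^ (r1 + 1) := by
    by_contra hne
    have hP2 : (a0 ^ s * a1 ^ s) * (a0 ^ s * a1 ^ s) = 1 := by
      calc (a0 ^ s * a1 ^ s) * (a0 ^ s * a1 ^ s) = (a0^s*a0^s)*(a1^s*a1^s) := by ring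
        _ = 1 := by rw [hA0, hA1, one_mul]
    have h1ne : (1 : F) ≠ -1 := by
      intro h
      apply h2
      linear_combination h
    have hP : a0 ^ s * a1 ^ s = (-1 : F) ^ r1 := by
      rcases mul_self_eq_one_iff.1 hP2 with h | h <;>
        rcases Nat.even_or_odd r1 with hp | hp <;>
          simp [h, hp.neg_one_pow, pow_succ] at hne ⊢
    obtain ⟨ν, hν0, hνs⟩ := exists_pow_s_eq_neg_one' F q s hq hs hspos
    obtain ⟨x, hx⟩ := hbij.2 (a0 * ν)
    have hzs : (a0 * ν) ^ s = -(a0 ^ s) := by rw [mul_pow, hνs]; ring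
    have hxs : (a0 * ν) ^ s = a0 ^ s := by
      rcases eq_or_ne x 0 with h0 | h0
      · exfalso
        apply mul_ne_zero ha0 hν0
        rw [← hx, h0, hf0]
      · rcases hdichot x h0 with h1 | h1
        · rw [← hx, hf1 x h1, mul_pow, pow_right_comm, h1, one_pow, mul_one]
        · rw [← hx, hfm1 x h1, mul_pow, pow_right_comm, h1]
          rw [← hP]
          linear_combination (a0 ^ s) * hA1
    have hcontra : a0 ^ s = -(a0 ^ s) := hxs.symm.trans hzs
    have h2a : (2 : F) * a0 ^ s = 0 := by linear_combination hcontra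
    exact absurd h2a (mul_ne_zero h2 (pow_ne_zero s ha0))
  -- main computation
  intro c
  rcases eq_or_ne c 0 with rfl | hc0
  · rw [hf0, hg]
    simp [zero_pow hspos.ne', zero_pow (show rt0 ≠ 0 by omega), zero_pow (show rt1 ≠ 0 by omega)]
  rcases hdichot c hc0 with hcs | hcs
  · -- c^s = 1
    rw [hf1 c hcs, hg]
    have hd0 : a0 * c ^ r0 / a0 = c ^ r0 := by field_simp
    have hx0s : (c ^ r0) ^ s = 1 := by rw [pow_right_comm, hcs, one_pow]
    have hcrr : (c ^ r0) ^ rt0 = c := by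
      rw [← pow_mul]
      have h1 : ((r0 * rt0 : ℕ) : ℤ) = 1 - (s : ℤ) * t0 := by push_cast; linarith
      have hz : c ^ ((r0 * rt0 : ℕ) : ℤ) = c := by
        rw [h1, zpow_sub₀ hc0, zpow_one, zpow_mul, zpow_natCast, hcs, one_zpow, div_one]
      rwa [zpow_natCast] at hz
    have hfac : (1 + (-1 : F) ^ r1 * ((a0 * c ^ r0) / a1) ^ s) = 0 := by
      have h1 : ((a0 * c ^ r0) / a1) ^ s = a0 ^ s * a1 ^ s := by
        rw [div_pow, mul_pow, hx0s, mul_one]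
        rw [div_eq_iff (pow_ne_zero s ha1)]
        linear_combination (-(a0 ^ s)) * hA1
      rw [h1, hkey, pow_succ]
      linear_combination -hm
    rw [hd0, hx0s, hcrr, hfac]
    calc (2:F)⁻¹ * c * (1 + 1) + 2⁻¹ * (-1:F) ^ t1 * (a0 * c ^ r0 / a1) ^ rt1 * 0
        = c * ((2:F)⁻¹ * 2) := by ring
      _ = c := by rw [inv_mul_cancel₀ h2, mul_one]
  · -- c^s = -1
    rw [hfm1 c hcs, hg]
    have hd1 : a1 * c ^ r1 / a1 = c ^ r1 := by rw [mul_comm, mul_div_assoc, div_self ha1, mul_one]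
    have hx1s : (c ^ r1) ^ s = (-1 : F) ^ r1 := by rw [pow_right_comm, hcs]
    have hfac0 : (1 + ((a1 * c ^ r1) / a0) ^ s) = 0 := by
      have h1 : ((a1 * c ^ r1) / a0) ^ s = a1 ^ s * (-1 : F) ^ r1 * a0 ^ s := by
        rw [div_pow, mul_pow, pow_right_comm, hcs]
        rw [div_eq_iff (pow_ne_zero s ha0)]
        linear_combination (-(a1 ^ s * (-1 : F) ^ r1)) * hA0
      rw [h1]
      have hkey' : a0 ^ s * a1 ^ s = (-1 : F) ^ r1 * (-1) := by rw [hkey, pow_succ]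
      linear_combination ((-1 : F) ^ r1) * hkey' - hm
    have hcrr1 : (c ^ r1) ^ rt1 * (-1 : F) ^ t1 = c := by
      rw [← pow_mul]
      have h1 : ((r1 * rt1 : ℕ) : ℤ) = 1 - (s : ℤ) * t1 := by push_cast; linarith
      have hz : c ^ ((r1 * rt1 : ℕ) : ℤ) * (-1 : F) ^ t1 = c := by
        rw [h1, zpow_sub₀ hc0, zpow_one, zpow_mul, zpow_natCast, hcs]
        rw [div_mul_cancel₀]
        exact zpow_ne_zero t1 (by norm_num)
      rwa [zpow_natCast] at hz
    rw [hd1, hx1s, hfac0, hm]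
    calc (2:F)⁻¹ * (a1 * c ^ r1 / a0) ^ rt0 * 0
          + 2⁻¹ * (-1 : F) ^ t1 * (c ^ r1) ^ rt1 * (1 + 1)
        = (c ^ r1) ^ rt1 * (-1 : F) ^ t1 * ((2:F)⁻¹ * 2) := by ring
      _ = c := by rw [inv_mul_cancel₀ h2, mul_one, hcrr1]
end

section
/- Let q be odd, s = (q-1)/2, and let r_0, r_1 be positive integers such that s divides r_0^2 - 1 and 2s divides r_1^2 - 1. Then f(x) = (1/2) x^{r_0}(1 + x^s) + (1/2) x^{r_1}(1 - x^s) is a permutation of F_q satisfying f(f(c)) = c for all c ∈ F_q (a self-inverse permutation polynomial). -/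
theorem self_inverse_pp
    (F : Type*) [Field F] [Fintype F] (q s : ℕ)
    (hq : Fintype.card F = q) (hqodd : Odd q)
    (hs : q - 1 = 2 * s)
    (r0 r1 : ℕ) (hr0 : 0 < r0) (hr1 : 0 < r1)
    (hd0 : s ∣ r0 ^ 2 - 1) (hd1 : 2 * s ∣ r1 ^ 2 - 1)
    (f : F → F)
    (hf : ∀ x : F, f x = (2 : F)⁻¹ * x ^ r0 * (1 + x ^ s)
                        + (2 : F)⁻¹ * x ^ r1 * (1 - x ^ s)) :
    Function.Bijective f ∧ ∀ c : F, f (f c) = c := by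
  -- 2 ≠ 0 in F
  have hchar : ringChar F ≠ 2 := by
    intro h
    have hmod := FiniteField.even_card_iff_char_two.mp h
    rw [hq] at hmod
    rcases hqodd with ⟨k, hk⟩
    omega
  have htwo : (2 : F) ≠ 0 := Ring.two_ne_zero hchar
  have hqcard : 2 ≤ q := hq ▸ Fintype.one_lt_card
  have hspos : 0 < s := by omega
  have hr1odd : Odd r1 := by
    rcases Nat.even_or_odd r1 with he | ho
    · exfalso
      obtain ⟨j, hj⟩ : 2 ∣ r1 ^ 2 - 1 := dvd_trans ⟨s, rfl⟩ hd1
      obtain ⟨m, hm⟩ := he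
      have ht : r1 ^ 2 = 4 * (m * m) := by rw [hm]; ring
      have h1le : 1 ≤ r1 ^ 2 := Nat.one_le_pow _ _ hr1
      rw [ht] at hj h1le
      omega
    · exact ho
  -- pow_card_sub_one
  have hone : ∀ x : F, x ≠ 0 → x ^ (2 * s) = 1 := by
    intro x hx
    rw [← hs, ← hq]
    exact FiniteField.pow_card_sub_one_eq_one x hx
  have key : ∀ x : F, f (f x) = x := by
    have fval : ∀ x : F, x ≠ 0 → (x ^ s = 1 ∧ f x = x ^ r0) ∨ (x ^ s = -1 ∧ f x = x ^ r1) := by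
      intro x hx
      have hsq : x ^ s * x ^ s = 1 := by
        rw [← pow_add, ← two_mul]; exact hone x hx
      rcases mul_self_eq_one_iff.mp hsq with h | h
      · left
        refine ⟨h, ?_⟩
        rw [hf, h]
        field_simp
        ring
      · right
        refine ⟨h, ?_⟩
        rw [hf, h]
        field_simp
        ring
    intro x
    by_cases hx : x = 0
    · subst hx
      have h0 : f 0 = 0 := by
        rw [hf]
        simp [zero_pow hr0.ne', zero_pow hr1.ne', zero_pow hspos.ne']
      rw [h0, h0]
    · rcases fval x hx with ⟨h1, h2⟩ | ⟨h1, h2⟩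
      · -- x^s = 1, f x = x^r0
        have hxr0 : (x ^ r0 : F) ≠ 0 := pow_ne_zero _ hx
        have hps : (x ^ r0) ^ s = 1 := by
          rw [← pow_mul, mul_comm, pow_mul, h1, one_pow]
        rcases fval _ hxr0 with ⟨_, h4⟩ | ⟨h3, _⟩
        · rw [h2, h4, ← pow_mul, ← pow_two]
          rcases hd0 with ⟨k, hk⟩
          have : r0 ^ 2 = 1 + s * k := by
            have : 1 ≤ r0 ^ 2 := Nat.one_le_pow _ _ hr0
            omega
          rw [this, pow_add, pow_one, pow_mul, h1, one_pow, mul_one]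
        · rw [hps] at h3
          exact absurd h3 (by
            intro h
            have : (2 : F) = 0 := by linear_combination h
            exact htwo this)
      · -- x^s = -1, f x = x^r1
        have hxr1 : (x ^ r1 : F) ≠ 0 := pow_ne_zero _ hx
        have hps : (x ^ r1) ^ s = -1 := by
          rw [← pow_mul, mul_comm, pow_mul, h1, hr1odd.neg_one_pow]
        rcases fval _ hxr1 with ⟨h3, _⟩ | ⟨_, h4⟩
        · rw [hps] at h3
          exact absurd h3 (by
            intro h
            have : (2 : F) = 0 := by linear_combination -h
            exact htwo this)
        · rw [h2, h4, ← pow_mul, ← pow_two]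
          rcases hd1 with ⟨k, hk⟩
          have : r1 ^ 2 = 1 + 2 * s * k := by
            have : 1 ≤ r1 ^ 2 := Nat.one_le_pow _ _ hr1
            omega
          rw [this, pow_add, pow_one, pow_mul, hone x hx, one_pow, mul_one]
  exact ⟨Function.Involutive.bijective key, key⟩
end

section
/- Let q - 1 = ds with d ≥ 3, let a_0, a_1 ∈ F_q^*, r_0, r_1 positive integers, and define f(x) = (1/d)(a_0 x^{r_0} - a_1 x^{r_1})(1 + x^s + ⋯ + x^{(d-1)s}) + a_1 x^{r_1}. Then f is a permutation of F_q if and only if gcd(r_0 r_1, s) = 1, gcd(r_1, d) = 1, and a_0^s = a_1^s. -/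
/-!
Since `∑_{j<d} x^{js}` is `d` on the group `μ_s` of `s`-th roots of unity and `0` on the rest of
`Fˣ`, `f` is `x ↦ a0 x^r0` on `μ_s` and `x ↦ a1 x^r1` off it (and `f 0 = 0`). On `μ_s` this is
injective iff `gcd(r0, s) = 1`; on `Fˣ \ μ_s` iff `gcd(r1, q - 1) = 1`, since a nontrivial
`r1`-th root of unity `z` gives `f x = f (x z)` whenever `x^s ≠ 1 ≠ (x z)^s`, and `d ≥ 3` provides
such an `x`. The two images are separated by `w ↦ w^s`: it is `a0^s` on `f(μ_s)` and
`a1^s (x^s)^r1 ≠ a1^s` off `μ_s` when `gcd(r1, d) = 1`. So they are disjoint when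
`a0^s = a1^s`, and conversely a preimage of `a1` must lie in `μ_s`, forcing `a0^s = a1^s`.
-/

open Function Finset

theorem eq_of_pow_eq_pow_of_coprime_s16 {G₀ : Type*} [CommGroupWithZero G₀] {x y : G₀} {m n : ℕ}
    (hmn : m.Coprime n) (hm : x ^ m = y ^ m) (hn : x ^ n = y ^ n) : x = y := by
  rcases eq_or_ne y 0 with rfl | hy
  · rcases eq_or_ne m 0 with rfl | hm0
    · rw [Nat.coprime_zero_left] at hmn
      simpa [hmn] using hn
    · rwa [zero_pow hm0, pow_eq_zero_iff hm0] at hm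
  · rw [← div_eq_one_iff_eq hy, ← pow_eq_one_iff_of_coprime hmn, div_pow, div_pow, hm, hn,
      div_self (pow_ne_zero _ hy), div_self (pow_ne_zero _ hy)]
    exact ⟨rfl, rfl⟩

namespace FiniteField

variable {K : Type*} [Field K] [Fintype K]

theorem natCast_ne_zero_of_dvd_card_sub_one {d : ℕ} (hd : d ∣ Fintype.card K - 1) :
    (d : K) ≠ 0 := by
  obtain ⟨s, hs⟩ := hd
  have hcast : ((Fintype.card K - 1 : ℕ) : K) = -1 := by
    rw [Nat.cast_sub Fintype.card_pos, cast_card_eq_zero, Nat.cast_one, zero_sub]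
  intro h
  rw [hs, Nat.cast_mul, h, zero_mul] at hcast
  exact one_ne_zero (neg_eq_zero.1 hcast.symm)

theorem exists_pow_eq_one_of_not_coprime {m n : ℕ} (hn : n ∣ Fintype.card K - 1)
    (hmn : ¬ m.Coprime n) : ∃ z : K, z ≠ 0 ∧ z ≠ 1 ∧ z ^ m = 1 ∧ z ^ n = 1 := by
  classical
  obtain ⟨p, hp, hpm, hpn⟩ := Nat.Prime.not_coprime_iff_dvd.1 hmn
  have := Fact.mk hp
  obtain ⟨g, hg⟩ := exists_prime_orderOf_dvd_card (G := Kˣ) p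
    (by rw [Fintype.card_units]; exact hpn.trans hn)
  have hpow : ∀ k, p ∣ k → (g : K) ^ k = 1 := fun k hk => by
    rw [← Units.val_pow_eq_pow_val, orderOf_dvd_iff_pow_eq_one.1 (hg ▸ hk), Units.val_one]
  refine ⟨g, g.ne_zero, ?_, hpow m hpm, hpow n hpn⟩
  rw [Ne, Units.val_eq_one, ← orderOf_eq_one_iff, hg]
  exact hp.one_lt.ne'

theorem exists_ne_zero_pow_ne_one_pow_ne {d s : ℕ} (hds : Fintype.card K - 1 = d * s)
    (hd : 3 ≤ d) (c : K) : ∃ x : K, x ≠ 0 ∧ x ^ s ≠ 1 ∧ x ^ s ≠ c := by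
  classical
  obtain ⟨g, hg⟩ := IsCyclic.exists_generator (α := Kˣ)
  have hg_order : orderOf (g : K) = d * s := by
    rw [orderOf_units, orderOf_eq_card_of_forall_mem_zpowers hg, Nat.card_eq_fintype_card,
      Fintype.card_units, hds]
  set y : K := (g : K) ^ s
  have hy_order : orderOf y = d := by
    have := orderOf_pow_orderOf_div (x := (g : K)) (n := d)
      (by rw [orderOf_units]; exact (orderOf_pos g).ne') (by rw [hg_order]; exact dvd_mul_right d s)
    rwa [hg_order, Nat.mul_div_cancel_left s (by omega)] at this
  have hy1 : y ≠ 1 := by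
    simpa using pow_ne_one_of_lt_orderOf one_ne_zero (by omega : 1 < orderOf y)
  have hy2 : y ^ 2 ≠ 1 := pow_ne_one_of_lt_orderOf two_ne_zero (by omega)
  -- `x = g` or `x = g^2` works: `y` and `y^2` are distinct and different from `1`
  by_cases hc : y = c
  · refine ⟨(g : K) ^ 2, pow_ne_zero _ g.ne_zero, ?_, ?_⟩ <;> rw [← pow_mul, mul_comm, pow_mul]
    · exact hy2
    · rw [← hc, Ne, sq, mul_eq_left₀ (pow_ne_zero _ g.ne_zero)]
      exact hy1
  · exact ⟨g, g.ne_zero, hy1, hc⟩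

end FiniteField

open FiniteField

open Classical in
noncomputable def twoBranchMap {K : Type*} [Field K] (s r0 r1 : ℕ) (a0 a1 : K) (x : K) : K :=
  if x ^ s = 1 then a0 * x ^ r0 else a1 * x ^ r1

section TwoBranchMap

variable {K : Type*} [Field K] {s r0 r1 : ℕ} {a0 a1 : K} {x : K}

theorem twoBranchMap_of_pow_eq_one (hx : x ^ s = 1) :
    twoBranchMap s r0 r1 a0 a1 x = a0 * x ^ r0 :=
  if_pos hx

theorem twoBranchMap_of_pow_ne_one (hx : x ^ s ≠ 1) :
    twoBranchMap s r0 r1 a0 a1 x = a1 * x ^ r1 :=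
  if_neg hx

theorem twoBranchMap_zero (hs : s ≠ 0) (hr1 : r1 ≠ 0) : twoBranchMap s r0 r1 a0 a1 0 = 0 := by
  rw [twoBranchMap_of_pow_ne_one (by simp [hs]), zero_pow hr1, mul_zero]

theorem twoBranchMap_ne_zero (ha0 : a0 ≠ 0) (ha1 : a1 ≠ 0) (hx : x ≠ 0) :
    twoBranchMap s r0 r1 a0 a1 x ≠ 0 := by
  by_cases hxs : x ^ s = 1
  · rw [twoBranchMap_of_pow_eq_one hxs]
    exact mul_ne_zero ha0 (pow_ne_zero r0 hx)
  · rw [twoBranchMap_of_pow_ne_one hxs]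
    exact mul_ne_zero ha1 (pow_ne_zero r1 hx)

theorem twoBranchMap_eq_geom_sum_formula [Fintype K] {d : ℕ} (hds : Fintype.card K - 1 = d * s)
    (hs : s ≠ 0) (hr0 : r0 ≠ 0) (hr1 : r1 ≠ 0) (a0 a1 x : K) :
    twoBranchMap s r0 r1 a0 a1 x =
      (d : K)⁻¹ * (a0 * x ^ r0 - a1 * x ^ r1) * (∑ j ∈ range d, x ^ (j * s)) + a1 * x ^ r1 := by
  rcases eq_or_ne x 0 with rfl | hx
  · simp [twoBranchMap, hs, hr0, hr1]
  have hd : (d : K) ≠ 0 := natCast_ne_zero_of_dvd_card_sub_one ⟨s, hds⟩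
  simp_rw [pow_mul']
  by_cases hxs : x ^ s = 1
  · rw [twoBranchMap_of_pow_eq_one hxs, hxs]
    simp only [one_pow, sum_const, card_range, nsmul_eq_mul, mul_one]
    field_simp
    ring
  · have hxd : (x ^ s) ^ d = 1 := by
      rw [← pow_mul, mul_comm, ← hds, pow_card_sub_one_eq_one x hx]
    rw [twoBranchMap_of_pow_ne_one hxs, geom_sum_eq hxs, hxd, sub_self, zero_div]
    ring

theorem twoBranchMap_ne_of_pow_eq_one_of_pow_ne_one [Fintype K] {d : ℕ}
    (hds : Fintype.card K - 1 = d * s) (ha1 : a1 ≠ 0) (ha : a0 ^ s = a1 ^ s)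
    (h1d : r1.Coprime d) {y : K} (hx : x ^ s = 1) (hy : y ≠ 0) (hys : y ^ s ≠ 1) :
    twoBranchMap s r0 r1 a0 a1 x ≠ twoBranchMap s r0 r1 a0 a1 y := by
  rw [twoBranchMap_of_pow_eq_one hx, twoBranchMap_of_pow_ne_one hys]
  intro h
  have hyr : a1 ^ s * (y ^ s) ^ r1 = a1 ^ s * 1 :=
    calc a1 ^ s * (y ^ s) ^ r1 = (a1 * y ^ r1) ^ s := by ring
      _ = a0 ^ s * (x ^ s) ^ r0 := by rw [← h]; ring
      _ = a1 ^ s * 1 := by rw [hx, one_pow, ha]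
  have hyd : (y ^ s) ^ d = 1 := by
    rw [← pow_mul, mul_comm, ← hds, pow_card_sub_one_eq_one y hy]
  exact hys ((pow_eq_one_iff_of_coprime h1d).1 ⟨mul_left_cancel₀ (pow_ne_zero s ha1) hyr, hyd⟩)

theorem injective_twoBranchMap [Fintype K] {d : ℕ} (hds : Fintype.card K - 1 = d * s)
    (hs : s ≠ 0) (hr1 : r1 ≠ 0) (ha0 : a0 ≠ 0) (ha1 : a1 ≠ 0) (h0 : r0.Coprime s)
    (h1s : r1.Coprime s) (h1d : r1.Coprime d) (ha : a0 ^ s = a1 ^ s) :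
    Injective (twoBranchMap s r0 r1 a0 a1) := by
  intro x y hxy
  have hT0 : twoBranchMap s r0 r1 a0 a1 0 = 0 := twoBranchMap_zero hs hr1
  rcases eq_or_ne x 0 with rfl | hx
  · by_contra hy
    exact twoBranchMap_ne_zero ha0 ha1 (Ne.symm hy) (hxy.symm.trans hT0)
  rcases eq_or_ne y 0 with rfl | hy
  · exact absurd (hxy.trans hT0) (twoBranchMap_ne_zero ha0 ha1 hx)
  by_cases hxs : x ^ s = 1 <;> by_cases hys : y ^ s = 1
  · rw [twoBranchMap_of_pow_eq_one hxs, twoBranchMap_of_pow_eq_one hys] at hxy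
    exact eq_of_pow_eq_pow_of_coprime_s16 h0 (mul_left_cancel₀ ha0 hxy) (hxs.trans hys.symm)
  · exact absurd hxy (twoBranchMap_ne_of_pow_eq_one_of_pow_ne_one hds ha1 ha h1d hxs hy hys)
  · exact absurd hxy.symm (twoBranchMap_ne_of_pow_eq_one_of_pow_ne_one hds ha1 ha h1d hys hx hxs)
  · rw [twoBranchMap_of_pow_ne_one hxs, twoBranchMap_of_pow_ne_one hys] at hxy
    have h1 : r1.Coprime (Fintype.card K - 1) := hds ▸ Nat.Coprime.mul_right h1d h1s
    exact eq_of_pow_eq_pow_of_coprime_s16 h1 (mul_left_cancel₀ ha1 hxy)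
      ((pow_card_sub_one_eq_one x hx).trans (pow_card_sub_one_eq_one y hy).symm)

theorem coprime_of_injective_twoBranchMap [Fintype K] (hs : s ∣ Fintype.card K - 1)
    (hT : Injective (twoBranchMap s r0 r1 a0 a1)) : r0.Coprime s := by
  by_contra h
  obtain ⟨z, -, hz1, hzr, hzs⟩ := exists_pow_eq_one_of_not_coprime hs h
  refine hz1 (hT ?_)
  rw [twoBranchMap_of_pow_eq_one hzs, twoBranchMap_of_pow_eq_one (one_pow s), hzr, one_pow]

theorem coprime_card_sub_one_of_injective_twoBranchMap [Fintype K] {d : ℕ}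
    (hds : Fintype.card K - 1 = d * s) (hd : 3 ≤ d)
    (hT : Injective (twoBranchMap s r0 r1 a0 a1)) : r1.Coprime (Fintype.card K - 1) := by
  by_contra h
  obtain ⟨z, hz0, hz1, hzr, -⟩ := exists_pow_eq_one_of_not_coprime dvd_rfl h
  obtain ⟨x, hx0, hxs, hxzs⟩ := exists_ne_zero_pow_ne_one_pow_ne hds hd (z ^ s)⁻¹
  have hxz : (x * z) ^ s ≠ 1 := by
    rwa [mul_pow, Ne, mul_eq_one_iff_eq_inv₀ (pow_ne_zero s hz0)]
  have : x * z = x := hT (by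
    rw [twoBranchMap_of_pow_ne_one hxz, twoBranchMap_of_pow_ne_one hxs, mul_pow, hzr, mul_one])
  exact hz1 ((mul_eq_left₀ hx0).1 this)

theorem pow_eq_pow_of_surjective_twoBranchMap [Fintype K] (ha1 : a1 ≠ 0) (hr1 : r1 ≠ 0)
    (h1 : r1.Coprime (Fintype.card K - 1)) (hT : Surjective (twoBranchMap s r0 r1 a0 a1)) :
    a0 ^ s = a1 ^ s := by
  obtain ⟨x, hx⟩ := hT a1
  by_cases hxs : x ^ s = 1
  · rw [twoBranchMap_of_pow_eq_one hxs] at hx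
    rw [← hx, mul_pow, ← pow_mul, mul_comm r0, pow_mul, hxs, one_pow, mul_one]
  · rw [twoBranchMap_of_pow_ne_one hxs, mul_eq_left₀ ha1] at hx
    have hx0 : x ≠ 0 := by
      rintro rfl
      simp [hr1] at hx
    have hx1 : x = 1 := (pow_eq_one_iff_of_coprime h1).1 ⟨hx, pow_card_sub_one_eq_one x hx0⟩
    exact absurd (by rw [hx1, one_pow]) hxs

theorem bijective_twoBranchMap_iff [Fintype K] {d : ℕ} (hds : Fintype.card K - 1 = d * s)
    (hd : 3 ≤ d) (hs : s ≠ 0) (hr1 : r1 ≠ 0) (ha0 : a0 ≠ 0) (ha1 : a1 ≠ 0) :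
    Bijective (twoBranchMap s r0 r1 a0 a1) ↔
      (r0 * r1).Coprime s ∧ r1.Coprime d ∧ a0 ^ s = a1 ^ s := by
  rw [Nat.coprime_mul_iff_left]
  constructor
  · intro hT
    have h1 := coprime_card_sub_one_of_injective_twoBranchMap hds hd hT.injective
    obtain ⟨h1d, h1s⟩ := Nat.coprime_mul_iff_right.1 (hds ▸ h1)
    exact ⟨⟨coprime_of_injective_twoBranchMap ⟨d, hds.trans (mul_comm d s)⟩ hT.injective, h1s⟩,
      h1d, pow_eq_pow_of_surjective_twoBranchMap ha1 hr1 h1 hT.surjective⟩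
  · rintro ⟨⟨h0, h1s⟩, h1d, ha⟩
    exact Finite.injective_iff_bijective.1
      (injective_twoBranchMap hds hs hr1 ha0 ha1 h0 h1s h1d ha)

end TwoBranchMap

theorem two_branch_pp_criterion
    (F : Type*) [Field F] [Fintype F] (q d s : ℕ)
    (hq : Fintype.card F = q)
    (hd : 3 ≤ d) (hs : 0 < s) (hds : q - 1 = d * s)
    (a0 a1 : F) (ha0 : a0 ≠ 0) (ha1 : a1 ≠ 0)
    (r0 r1 : ℕ) (hr0 : 0 < r0) (hr1 : 0 < r1)
    (f : F → F)
    (hf : ∀ x : F, f x = (d : F)⁻¹ * (a0 * x ^ r0 - a1 * x ^ r1) *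
            (∑ j ∈ Finset.range d, x ^ (j * s)) + a1 * x ^ r1) :
    Function.Bijective f ↔
      Nat.gcd (r0 * r1) s = 1 ∧ Nat.gcd r1 d = 1 ∧ a0 ^ s = a1 ^ s := by
  subst hq
  have hfT : f = twoBranchMap s r0 r1 a0 a1 := funext fun x =>
    (hf x).trans (twoBranchMap_eq_geom_sum_formula hds hs.ne' hr0.ne' hr1.ne' a0 a1 x).symm
  rw [hfT]
  exact bijective_twoBranchMap_iff hds hd hs.ne' hr1.ne' ha0 ha1
end

section
/- Let n, i, j be positive integers, q = 2^{2n}, s = (2^{2n} - 1)/3. Then f(x) = (x^{2^i} + x^{2^j})(1 + x^s + x^{2s}) + x^{2^j} is a permutation polynomial of F_{2^{2n}}. -/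
theorem corollary_2_7_pp
    (F : Type*) [Field F] [Fintype F] (n i j s : ℕ)
    (hn : 0 < n) (hi : 0 < i) (hj : 0 < j)
    (hq : Fintype.card F = 2 ^ (2 * n))
    (hs : 3 * s = 2 ^ (2 * n) - 1)
    (f : F → F)
    (hf : ∀ x : F, f x = (x ^ 2 ^ i + x ^ 2 ^ j) * (1 + x ^ s + x ^ (2 * s)) + x ^ 2 ^ j) :
    Function.Bijective f := by
  -- characteristic 2
  have h2 : (2 : F) = 0 := by
    have h := FiniteField.cast_card_eq_zero F
    rw [hq] at h
    push_cast at h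
    have h2n : 2 * n ≠ 0 := by omega
    exact pow_eq_zero_iff h2n |>.mp h
  have hring : ringChar F = 2 := by
    have hdvd : ringChar F ∣ 2 := (CharP.cast_eq_zero_iff F (ringChar F) 2).mp h2
    have h1 : ringChar F ≠ 1 := CharP.ringChar_ne_one
    exact (Nat.prime_two.eq_one_or_self_of_dvd _ hdvd).resolve_left h1
  haveI : CharP F 2 := hring ▸ ringChar.charP F
  haveI : Fact (Nat.Prime 2) := ⟨Nat.prime_two⟩
  have hs0 : 0 < s := by
    have : (2:ℕ)^(2*n) ≥ 2^2 := Nat.pow_le_pow_right (by norm_num) (by omega)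
    omega
  -- Frobenius injectivity
  have frob : ∀ (k : ℕ) (a b : F), a ^ 2 ^ k = b ^ 2 ^ k → a = b := by
    intro k a b hab
    have h := sub_pow_char_pow (p := 2) a b k
    rw [hab, sub_self] at h
    have := pow_eq_zero_iff (pow_ne_zero k (two_ne_zero)) |>.mp h
    exact sub_eq_zero.mp this
  -- cube roots of unity
  have cube : ∀ x : F, x ≠ 0 → (x ^ s) ^ 3 = 1 := by
    intro x hx
    rw [← pow_mul]
    have hm : s * 3 = Fintype.card F - 1 := by rw [hq]; omega
    rw [hm]
    exact FiniteField.pow_card_sub_one_eq_one x hx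
  have hsum : ∀ ω : F, ω ^ 3 = 1 → ω ≠ 1 → 1 + ω + ω ^ 2 = 0 := by
    intro ω h3 h1
    have hmul : (ω - 1) * (1 + ω + ω ^ 2) = 0 := by linear_combination h3
    rcases mul_eq_zero.mp hmul with h | h
    · exact absurd (sub_eq_zero.mp h) h1
    · exact h
  -- case A: x^s = 1
  have hA : ∀ x : F, x ^ s = 1 → f x = x ^ 2 ^ i := by
    intro x hx1
    rw [hf, mul_comm 2 s, pow_mul, hx1]
    linear_combination (x ^ 2 ^ i + 2 * x ^ 2 ^ j) * h2
  -- case B: x ≠ 0, x^s ≠ 1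
  have hB : ∀ x : F, x ≠ 0 → x ^ s ≠ 1 → f x = x ^ 2 ^ j := by
    intro x hx hx1
    rw [hf, mul_comm 2 s, pow_mul, hsum _ (cube x hx) hx1, mul_zero, zero_add]
  have hf0 : f 0 = 0 := by
    rw [hf]
    simp [hs0.ne', (pow_pos (by norm_num : (0:ℕ) < 2) i).ne', 
      (pow_pos (by norm_num : (0:ℕ) < 2) j).ne', zero_pow, mul_pos hs0 (by norm_num : (0:ℕ) < 2)]
  -- s-power of images
  have hA' : ∀ x : F, x ^ s = 1 → (x ^ 2 ^ i) ^ s = 1 := by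
    intro x hx1
    rw [pow_right_comm, hx1, one_pow]
  have hB' : ∀ x : F, x ≠ 0 → x ^ s ≠ 1 → (x ^ 2 ^ j) ^ s ≠ 1 := by
    intro x hx hx1 hcon
    rw [pow_right_comm] at hcon
    have hd1 : orderOf (x ^ s) ∣ 2 ^ j := orderOf_dvd_of_pow_eq_one hcon
    have hd2 : orderOf (x ^ s) ∣ 3 := orderOf_dvd_of_pow_eq_one (cube x hx)
    have hcop : Nat.Coprime (2 ^ j) 3 := Nat.Coprime.pow_left _ (by norm_num)
    have : orderOf (x ^ s) ∣ 1 := by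
      have := Nat.dvd_gcd hd1 hd2
      rwa [Nat.Coprime.gcd_eq_one hcop] at this
    exact hx1 (orderOf_eq_one_iff.mp (Nat.eq_one_of_dvd_one this))
  -- nonzero preserved
  have hnz : ∀ x : F, x ≠ 0 → f x ≠ 0 := by
    intro x hx
    by_cases hx1 : x ^ s = 1
    · rw [hA x hx1]; exact pow_ne_zero _ hx
    · rw [hB x hx hx1]; exact pow_ne_zero _ hx
  rw [Fintype.bijective_iff_injective_and_card]
  refine ⟨?_, rfl⟩
  intro x y hxy
  by_cases hx : x = 0
  · subst hx
    by_contra hy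
    exact hnz y (Ne.symm hy) (by rw [← hxy, hf0])
  by_cases hy : y = 0
  · subst hy
    exact absurd (hxy.trans hf0) (hnz x hx)
  by_cases hx1 : x ^ s = 1 <;> by_cases hy1 : y ^ s = 1
  · exact frob i x y (by rw [← hA x hx1, ← hA y hy1, hxy])
  · exfalso
    apply hB' y hy hy1
    rw [← hB y hy hy1, ← hxy, hA x hx1]
    exact hA' x hx1
  · exfalso
    apply hB' x hx hx1
    rw [← hB x hx hx1, hxy, hA y hy1]
    exact hA' y hy1
  · exact frob j x y (by rw [← hB x hx hx1, ← hB y hy hy1, hxy])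
end

section
/- Let q - 1 = ds, ξ a primitive element of F_q, ω = ξ^s, h ∈ F_q[x], and r a positive integer. Define f(x) = x^r h(x^s). Then f is a permutation of F_q if and only if gcd(r, s) = 1 and the map x ↦ x^r h(x)^s permutes the set {1, ω, ω^2, ..., ω^{d-1}} of d-th roots of unity. -/
theorem wan_lidl_criterion
    (F : Type*) [Field F] [Fintype F] (q d s : ℕ)
    (hq : Fintype.card F = q)
    (hd : 0 < d) (hs : 0 < s) (hds : q - 1 = d * s)
    (ξ : Fˣ) (hξ : ∀ u : Fˣ, ∃ n : ℕ, ξ ^ n = u)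
    (ω : F) (hω : ω = (ξ : F) ^ s)
    (h : Polynomial F) (r : ℕ) (hr : 0 < r)
    (f : F → F) (hf : ∀ x : F, f x = x ^ r * h.eval (x ^ s)) :
    Function.Bijective f ↔
      Nat.gcd r s = 1 ∧
      Set.BijOn (fun x : F => x ^ r * (h.eval x) ^ s)
        {x : F | ∃ k < d, x = ω ^ k} {x : F | ∃ k < d, x = ω ^ k} := by
  set S : Set F := {x : F | ∃ k < d, x = ω ^ k} with hSdef
  set g : F → F := fun x : F => x ^ r * (h.eval x) ^ s with hgdef
  have hq1 : Nat.card Fˣ = q - 1 := by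
    rw [Nat.card_units, Nat.card_eq_fintype_card, hq]
  have hord : orderOf ξ = q - 1 := by
    rw [← hq1]
    exact orderOf_eq_card_of_forall_mem_zpowers (fun u => by
      obtain ⟨n, hn⟩ := hξ u
      exact ⟨(n : ℤ), by simpa using hn⟩)
  have hξ1 : ξ ^ (q - 1) = 1 := by rw [← hord]; exact pow_orderOf_eq_one ξ
  -- membership characterization of S
  have hSmem : ∀ x : F, x ∈ S ↔ ∃ u : Fˣ, x = (u : F) ^ s := by
    intro x
    constructor
    · rintro ⟨k, hk, rfl⟩
      refine ⟨ξ ^ k, ?_⟩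
      rw [hω, ← pow_mul, Units.val_pow_eq_pow_val, ← pow_mul, mul_comm]
    · rintro ⟨u, rfl⟩
      obtain ⟨n, rfl⟩ := hξ u
      refine ⟨n % d, Nat.mod_lt n hd, ?_⟩
      have hn' : n * s = (q - 1) * (n / d) + (n % d) * s := by
        conv_lhs => rw [← Nat.div_add_mod n d]
        rw [hds]; ring
      rw [Units.val_pow_eq_pow_val, ← pow_mul, hn', pow_add, pow_mul]
      have : ((ξ : F)) ^ (q - 1) = 1 := by
        rw [← Units.val_pow_eq_pow_val, hξ1, Units.val_one]
      rw [this, one_pow, one_mul, hω, ← pow_mul, mul_comm]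
  have h0S : (0 : F) ∉ S := by
    rw [hSmem]
    rintro ⟨u, hu⟩
    exact (pow_ne_zero s u.ne_zero) hu.symm
  have hSfin : S.Finite := Set.toFinite _
  have hf0 : f 0 = 0 := by rw [hf, zero_pow hr.ne', zero_mul]
  have hgfs : ∀ x : F, g (x ^ s) = (f x) ^ s := by
    intro x
    rw [hf, hgdef]
    simp only [mul_pow, ← pow_mul]
    rw [mul_comm s r]
  constructor
  · intro hbij
    constructor
    · -- gcd r s = 1
      by_contra hg1
      set p := (Nat.gcd r s).minFac with hpdef
      have hp : p.Prime := Nat.minFac_prime hg1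
      have hpr : p ∣ r := (Nat.minFac_dvd _).trans (Nat.gcd_dvd_left r s)
      have hps : p ∣ s := (Nat.minFac_dvd _).trans (Nat.gcd_dvd_right r s)
      have hpq : p ∣ q - 1 := hds ▸ Dvd.dvd.mul_left hps d
      set m := (q - 1) / p with hmdef
      have key : ∀ t : ℕ, p ∣ t → (ξ ^ m) ^ t = 1 := by
        rintro t ⟨b, hb⟩
        obtain ⟨a, ha⟩ := hpq
        have hm : m = a := by rw [hmdef, ha, Nat.mul_div_cancel_left _ hp.pos]
        rw [← pow_mul, hm, hb, show a * (p * b) = (q - 1) * b by rw [ha]; ring,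
          pow_mul, hξ1, one_pow]
      have hζr := key r hpr
      have hζs := key s hps
      have hq1pos : 0 < q - 1 := hds ▸ Nat.mul_pos hd hs
      have hne : (ξ ^ m : Fˣ) ≠ 1 := by
        intro h1
        have hdvd := orderOf_dvd_of_pow_eq_one h1
        rw [hord] at hdvd
        have hm : m < q - 1 := Nat.div_lt_self hq1pos hp.one_lt
        have hmpos : 0 < m := Nat.div_pos (Nat.le_of_dvd hq1pos hpq) hp.pos
        exact absurd (Nat.le_of_dvd hmpos hdvd) (not_le.mpr hm)
      have heq : f ((ξ ^ m : Fˣ) : F) = f 1 := by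
        rw [hf, hf]
        rw [← Units.val_pow_eq_pow_val, hζr, ← Units.val_pow_eq_pow_val, hζs]
        simp
      have := hbij.1 heq
      exact hne (Units.ext (by rw [this, Units.val_one]))
    · -- BijOn
      have hmaps : Set.MapsTo g S S := by
        intro x hx
        obtain ⟨u, rfl⟩ := (hSmem x).mp hx
        have hfu : f (u : F) ≠ 0 := by
          intro h0
          exact u.ne_zero (hbij.1 (h0.trans hf0.symm))
        obtain ⟨v, hv⟩ := IsUnit.exists_left_inv (isUnit_iff_ne_zero.mpr hfu).inv
        rw [hgfs]
        exact (hSmem _).mpr ⟨(isUnit_iff_ne_zero.mpr hfu).unit, by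
          rw [IsUnit.unit_spec]⟩
      have hsurj : Set.SurjOn g S S := by
        intro z hz
        obtain ⟨u, rfl⟩ := (hSmem z).mp hz
        obtain ⟨x, hx⟩ := hbij.2 (u : F)
        have hx0 : x ≠ 0 := by
          rintro rfl
          exact u.ne_zero (hf0 ▸ hx).symm
        refine ⟨x ^ s, ?_, by rw [hgfs, hx]⟩
        exact (hSmem _).mpr ⟨(isUnit_iff_ne_zero.mpr hx0).unit, by
          rw [IsUnit.unit_spec]⟩
      exact (Set.Finite.surjOn_iff_bijOn_of_mapsTo hSfin hmaps).mp hsurj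
  · rintro ⟨hgcd, hbijS⟩
    have hh : ∀ u : Fˣ, h.eval ((u : F) ^ s) ≠ 0 := by
      intro u h0
      have hmem : ((u : F) ^ s) ∈ S := (hSmem _).mpr ⟨u, rfl⟩
      have := hbijS.mapsTo hmem
      rw [hgdef] at this
      simp only [h0, zero_pow hs.ne', mul_zero] at this
      exact h0S this
    have hfne : ∀ x : F, x ≠ 0 → f x ≠ 0 := by
      intro x hx
      rw [hf]
      exact mul_ne_zero (pow_ne_zero _ hx)
        (by simpa [IsUnit.unit_spec] using hh (isUnit_iff_ne_zero.mpr hx).unit)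
    have hinj : Function.Injective f := by
      intro x y hxy
      rcases eq_or_ne x 0 with rfl | hx0
      · rcases eq_or_ne y 0 with rfl | hy0
        · rfl
        · exact absurd (hxy.symm.trans hf0) (hfne y hy0)
      rcases eq_or_ne y 0 with rfl | hy0
      · exact absurd (hxy.trans hf0) (hfne x hx0)
      have hxu := isUnit_iff_ne_zero.mpr hx0
      have hyu := isUnit_iff_ne_zero.mpr hy0
      have hxS : x ^ s ∈ S := (hSmem _).mpr ⟨hxu.unit, by rw [IsUnit.unit_spec]⟩
      have hyS : y ^ s ∈ S := (hSmem _).mpr ⟨hyu.unit, by rw [IsUnit.unit_spec]⟩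
      have hss : x ^ s = y ^ s := by
        apply hbijS.injOn hxS hyS
        rw [hgfs, hgfs, hxy]
      have hrr : x ^ r = y ^ r := by
        have hx' := hf x
        have hy' := hf y
        rw [hf, hf, hss] at hxy
        have hne : h.eval (y ^ s) ≠ 0 := by
          simpa [IsUnit.unit_spec] using hh hyu.unit
        exact mul_right_cancel₀ hne hxy
      -- pass to units
      have hxr : hxu.unit ^ r = hyu.unit ^ r := Units.ext (by
        simp [Units.val_pow_eq_pow_val, IsUnit.unit_spec, hrr])
      have hxs : hxu.unit ^ s = hyu.unit ^ s := Units.ext (by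
        simp [Units.val_pow_eq_pow_val, IsUnit.unit_spec, hss])
      set z : Fˣ := hxu.unit / hyu.unit with hzdef
      have hzr : z ^ r = 1 := by rw [hzdef, div_pow, hxr, div_self']
      have hzs : z ^ s = 1 := by rw [hzdef, div_pow, hxs, div_self']
      have hz1 : z = 1 := by
        have h1 := orderOf_dvd_of_pow_eq_one hzr
        have h2 := orderOf_dvd_of_pow_eq_one hzs
        have := Nat.dvd_gcd h1 h2
        rw [hgcd, Nat.dvd_one] at this
        exact orderOf_eq_one_iff.mp this
      have : hxu.unit = hyu.unit := by
        rwa [hzdef, div_eq_one] at hz1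
      calc x = (hxu.unit : F) := (IsUnit.unit_spec hxu).symm
        _ = (hyu.unit : F) := by rw [this]
        _ = y := IsUnit.unit_spec hyu
    exact Finite.injective_iff_bijective.mp hinj
end
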